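/- Multi-session state invariant for π: let F be any function of the stated type, k the shared key, pad the fixed padding, and suppose the reader and tag start synchronized with common counter ctr₀, the reader's stored index being F_k(ctr₀‖pad). Then for every n ≥ 0, after n consecutive honest complete sessions of π (each executed as specified, with the reader identifying the tag in Step 1 each time), the tag's counter and the reader's stored counter both equal ctr₀ + n (bitvector addition of n), the reader's stored index equals F_k((ctr₀ + n)‖pad), and in every one of the n sessions both parties output 1. (Proof by induction on n using the single-session synchronized completeness of π.) -/
import Mathlib


/-!
Multi-session state invariant for protocol π: starting synchronized with
common counter ctr₀, after n consecutive honest complete sessions both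
counters equal ctr₀ + n, the reader's stored index equals F_k((ctr₀+n)‖pad),
and every session succeeds (both parties output 1).
-/

/-- The reader's per-tag state: the stored index and the stored counter. -/
structure ReaderState (l_r : ℕ) where
  idx : BitVec l_r
  ctr : BitVec l_r

/-- One honest session of protocol π from reader state `R` and tag counter
`tctr`, on reader challenge `c₁` and tag randomness `rT`.  Returns the new
reader state, the new tag counter, the reader's output, and the tag's
output. -/
def piSession {l_k l_d l_r l_p l_u l_v : ℕ}
    (h1 : l_r + l_p = l_d) (h2 : l_u + l_r + l_v = l_d)
    (F : BitVec l_k → BitVec l_d → BitVec l_r)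
    (k : BitVec l_k) (pad : BitVec l_p)
    (R : ReaderState l_r) (tctr : BitVec l_r)
    (c₁ : BitVec l_u) (rT : BitVec l_v) :
    ReaderState l_r × BitVec l_r × Bool × Bool :=
  -- the tag's second-round message; the tag sets its counter to tctr + 1
  let α₁₁ := F k ((tctr ++ pad).cast h1)
  let α₁₂ := rT
  let α₁₃ := F k ((c₁ ++ α₁₁ ++ α₁₂).cast h2) ^^^ tctr
  let tctr' := tctr + 1
  -- the reader's Step-1 identification
  let ctrRec := F k ((c₁ ++ α₁₁ ++ α₁₂).cast h2) ^^^ α₁₃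
  if R.idx = α₁₁ ∧ R.ctr = ctrRec then
    -- Step 3: the reader updates its counter and index and replies with c₂
    let ctrR' := ctrRec + 1
    let R' : ReaderState l_r := ⟨F k ((ctrR' ++ pad).cast h1), ctrR'⟩
    let c₂ := F k ((c₁ ++ ctrR' ++ α₁₂).cast h2)
    -- the tag accepts iff c₂ matches its own computation
    (R', tctr', true, decide (c₂ = F k ((c₁ ++ tctr' ++ rT).cast h2)))
  else
    (R, tctr', false, false)

/-- `n` consecutive honest sessions of π with per-session inputs `ins`;
returns the reader state, the tag counter, and whether all sessions so far
ended with both parties outputting 1. -/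
def piRun {l_k l_d l_r l_p l_u l_v : ℕ}
    (h1 : l_r + l_p = l_d) (h2 : l_u + l_r + l_v = l_d)
    (F : BitVec l_k → BitVec l_d → BitVec l_r)
    (k : BitVec l_k) (pad : BitVec l_p)
    (R₀ : ReaderState l_r) (tctr₀ : BitVec l_r)
    (ins : ℕ → BitVec l_u × BitVec l_v) :
    ℕ → ReaderState l_r × BitVec l_r × Bool
  | 0 => (R₀, tctr₀, true)
  | n + 1 =>
    let (R, tctr, ok) := piRun h1 h2 F k pad R₀ tctr₀ ins n
    let (R', tctr', oR, oT) := piSession h1 h2 F k pad R tctr (ins n).1 (ins n).2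
    (R', tctr', ok && oR && oT)

theorem pi_multi_session_invariant
    (l_k l_d l_r l_p l_u l_v : ℕ)
    (h1 : l_r + l_p = l_d) (h2 : l_u + l_r + l_v = l_d)
    (F : BitVec l_k → BitVec l_d → BitVec l_r)
    (k : BitVec l_k) (pad : BitVec l_p)
    -- the common initial counter; initially synchronized
    (ctr₀ : BitVec l_r)
    (R₀ : ReaderState l_r)
    (hR₀ : R₀ = ⟨F k ((ctr₀ ++ pad).cast h1), ctr₀⟩)
    -- arbitrary per-session reader challenges and tag randomness
    (ins : ℕ → BitVec l_u × BitVec l_v)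
    (n : ℕ) :
    -- after n honest sessions: the reader's counter, the reader's index,
    -- and the tag's counter are as claimed, and all sessions succeeded
    (piRun h1 h2 F k pad R₀ ctr₀ ins n).1.ctr = ctr₀ + BitVec.ofNat l_r n ∧
    (piRun h1 h2 F k pad R₀ ctr₀ ins n).1.idx
      = F k (((ctr₀ + BitVec.ofNat l_r n) ++ pad).cast h1) ∧
    (piRun h1 h2 F k pad R₀ ctr₀ ins n).2.1 = ctr₀ + BitVec.ofNat l_r n ∧
    (piRun h1 h2 F k pad R₀ ctr₀ ins n).2.2 = true := by
  induction n with
  | zero => simp [piRun, hR₀]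
  | succ m ih =>
    obtain ⟨ih1, ih2, ih3, ih4⟩ := ih
    have hofn : BitVec.ofNat l_r (m + 1) = BitVec.ofNat l_r m + 1 := by
      apply BitVec.eq_of_toNat_eq
      simp [Nat.add_mod]
    simp only [piRun, piSession, hofn]
    simp [ih1, ih2, ih3, ih4, ← BitVec.xor_assoc, BitVec.xor_self,
      BitVec.zero_xor, add_assoc]
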